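/- arXiv:2209.13054 — 5 statements merged into one kernel-verified Lean document; each statement's English description precedes it below -/
import Mathlib

section
/- Let K : [0,T] → ℝ be continuous and H-Hölder continuous for some H ∈ (0,1), i.e. |K(t) - K(s)| ≤ C|t-s|^H for all s,t ∈ [0,T]. Then there exists a constant C' > 0 such that for all 0 ≤ s ≤ t ≤ T, ∫₀ᵗ (K(t-u)·1_{u≤t} - K(s-u)·1_{u≤s})² du ≤ C'·|t-s|^{2·min(H,1/2)}. -/
/-!
On `[0, s]` both kernels are switched on and the Hölder bound gives an integrand of size
`C² (t - s)^{2H}`; on `(s, t]` only `K (t - ·)` survives, bounded by `sup |K|`, so that piece is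
`O(t - s)`. Both `(t - s)^{2H}` and `t - s` are at most a constant times `(t - s)^{2 min(H, 1/2)}`
because `t - s ≤ T`.
-/

open MeasureTheory Set

lemma abs_le_abs_zero_add_of_holder {K : ℝ → ℝ} {T H C : ℝ} (hH : 0 ≤ H) (hC : 0 ≤ C)
    (hK : ∀ s ∈ Icc (0:ℝ) T, ∀ t ∈ Icc (0:ℝ) T, |K t - K s| ≤ C * |t - s| ^ H)
    {x : ℝ} (hx : x ∈ Icc 0 T) : |K x| ≤ |K 0| + C * T ^ H := by
  have hdiff : |K x - K 0| ≤ C * T ^ H := by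
    refine (hK 0 ⟨le_rfl, hx.1.trans hx.2⟩ x hx).trans ?_
    rw [sub_zero, abs_of_nonneg hx.1]
    exact mul_le_mul_of_nonneg_left (Real.rpow_le_rpow hx.1 hx.2 hH) hC
  calc |K x| = |K 0 + (K x - K 0)| := by ring_nf
    _ ≤ |K 0| + |K x - K 0| := abs_add_le _ _
    _ ≤ |K 0| + C * T ^ H := by gcongr

lemma rpow_le_rpow_sub_mul_rpow {x T a b : ℝ} (hx : 0 ≤ x) (hxT : x ≤ T) (ha : 0 ≤ a)
    (hab : a ≤ b) : x ^ b ≤ T ^ (b - a) * x ^ a := by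
  calc x ^ b = x ^ (b - a) * x ^ a := by
        rw [← Real.rpow_add_of_nonneg hx (sub_nonneg.2 hab) ha, sub_add_cancel]
    _ ≤ T ^ (b - a) * x ^ a := by gcongr

lemma continuousOn_comp_const_sub {K : ℝ → ℝ} {T a b c : ℝ} (hK : ContinuousOn K (Icc 0 T))
    (hbc : b ≤ c) (hcaT : c - a ≤ T) : ContinuousOn (fun u => K (c - u)) (Icc a b) :=
  hK.comp (by fun_prop) fun u hu => ⟨by linarith [hu.2], by linarith [hu.1]⟩

lemma setIntegral_Ioc_sq_le {g : ℝ → ℝ} {a b c : ℝ} (hab : a ≤ b)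
    (hg : ∀ u ∈ Ioc a b, |g u| ≤ c) : ∫ u in Ioc a b, g u ^ 2 ≤ c ^ 2 * (b - a) := by
  have hsq : ∀ u ∈ Ioc a b, ‖g u ^ 2‖ ≤ c ^ 2 := fun u hu => by
    rw [Real.norm_eq_abs, abs_of_nonneg (sq_nonneg _), ← sq_abs]
    exact pow_le_pow_left₀ (abs_nonneg _) (hg u hu) 2
  have hnorm := norm_setIntegral_le_of_norm_le_const (μ := volume) measure_Ioc_lt_top hsq
  rw [Real.volume_real_Ioc_of_le hab] at hnorm
  exact (Real.le_norm_self _).trans hnorm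

lemma setIntegral_sq_truncated_increment_eq {K : ℝ → ℝ} {T s t : ℝ}
    (hK : ContinuousOn K (Icc 0 T)) (hs : 0 ≤ s) (hst : s ≤ t) (htT : t ≤ T) :
    ∫ u in Ioc (0:ℝ) t,
        ((if u ≤ t then K (t - u) else 0) - (if u ≤ s then K (s - u) else 0)) ^ 2
      = (∫ u in Ioc (0:ℝ) s, (K (t - u) - K (s - u)) ^ 2) + ∫ u in Ioc s t, K (t - u) ^ 2 := by
  set f : ℝ → ℝ := fun u =>
    ((if u ≤ t then K (t - u) else 0) - (if u ≤ s then K (s - u) else 0)) ^ 2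
  have hf_left : EqOn (fun u => (K (t - u) - K (s - u)) ^ 2) f (Ioc 0 s) := fun u hu => by
    simp only [f, if_pos hu.2, if_pos (hu.2.trans hst)]
  have hf_right : EqOn (fun u => K (t - u) ^ 2) f (Ioc s t) := fun u hu => by
    simp only [f, if_pos hu.2, if_neg (not_le.2 hu.1), sub_zero]
  have hint_left : IntegrableOn f (Ioc 0 s) :=
    ((((continuousOn_comp_const_sub hK hst (by linarith)).sub
      (continuousOn_comp_const_sub hK le_rfl (by linarith))).pow 2).integrableOn_Icc.mono_set
      Ioc_subset_Icc_self).congr_fun hf_left measurableSet_Ioc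
  have hint_right : IntegrableOn f (Ioc s t) :=
    (((continuousOn_comp_const_sub hK le_rfl (by linarith)).pow 2).integrableOn_Icc.mono_set
      Ioc_subset_Icc_self).congr_fun hf_right measurableSet_Ioc
  rw [← Ioc_union_Ioc_eq_Ioc hs hst,
    setIntegral_union (Ioc_disjoint_Ioc_of_le le_rfl) measurableSet_Ioc hint_left hint_right,
    setIntegral_congr_fun measurableSet_Ioc hf_left,
    setIntegral_congr_fun measurableSet_Ioc hf_right]

/-- Hölder continuous difference kernel: square-increment estimate with exponent
`2 * min H (1/2)`. -/
theorem stmt_0 (T H C : ℝ) (hT : 0 < T) (hH : H ∈ Set.Ioo (0:ℝ) 1) (hC : 0 < C)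
    (K : ℝ → ℝ) (hKcont : ContinuousOn K (Set.Icc 0 T))
    (hK : ∀ s ∈ Set.Icc (0:ℝ) T, ∀ t ∈ Set.Icc (0:ℝ) T, |K t - K s| ≤ C * |t - s| ^ H) :
    ∃ C' > (0:ℝ), ∀ s t : ℝ, 0 ≤ s → s ≤ t → t ≤ T →
      (∫ u in Set.Ioc (0:ℝ) t,
        ((if u ≤ t then K (t - u) else 0) - (if u ≤ s then K (s - u) else 0)) ^ 2)
        ≤ C' * |t - s| ^ (2 * min H (1/2)) := by
  set α := 2 * min H (1/2)
  have hα0 : 0 ≤ α := by have := lt_min hH.1 one_half_pos; positivity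
  have hα2H : α ≤ 2 * H := by have := min_le_left H (1/2); linarith
  have hα1 : α ≤ 1 := by have := min_le_right H (1/2); linarith
  set M := |K 0| + C * T ^ H
  refine ⟨C ^ 2 * T ^ (2 * H - α) * T + M ^ 2 * T ^ (1 - α), by positivity, ?_⟩
  intro s t hs hst htT
  have hδ : 0 ≤ t - s := sub_nonneg.2 hst
  have hδT : t - s ≤ T := by linarith
  have hleft := setIntegral_Ioc_sq_le (c := C * (t - s) ^ H) hs fun u hu => by
    simpa [abs_of_nonneg hδ] using hK (s - u) ⟨by linarith [hu.2], by linarith [hu.1]⟩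
      (t - u) ⟨by linarith [hu.2], by linarith [hu.1]⟩
  have hright := setIntegral_Ioc_sq_le (c := M) hst fun u hu =>
    abs_le_abs_zero_add_of_holder (x := t - u) hH.1.le hC.le hK
      ⟨by linarith [hu.2], by linarith [hu.1]⟩
  have hδ2H : ((t - s) ^ H) ^ 2 = (t - s) ^ (2 * H) := by
    rw [← Real.rpow_natCast, ← Real.rpow_mul hδ, mul_comm, Nat.cast_ofNat]
  rw [setIntegral_sq_truncated_increment_eq hKcont hs hst htT, abs_of_nonneg hδ]
  calc _ ≤ (C * (t - s) ^ H) ^ 2 * (s - 0) + M ^ 2 * (t - s) := add_le_add hleft hright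
    _ = C ^ 2 * (t - s) ^ (2 * H) * s + M ^ 2 * (t - s) := by rw [mul_pow, hδ2H, sub_zero]
    _ ≤ C ^ 2 * (T ^ (2 * H - α) * (t - s) ^ α) * T + M ^ 2 * (T ^ (1 - α) * (t - s) ^ α) := by
        gcongr
        · exact rpow_le_rpow_sub_mul_rpow hδ hδT hα0 hα2H
        · linarith
        · simpa using rpow_le_rpow_sub_mul_rpow hδ hδT hα0 hα1
    _ = _ := by ring
end

section
/- Let K : [0,T] → ℝ be H-Hölder continuous with K(0) = 0, for some H ∈ (0,1). Then there exists a constant C > 0 such that for all 0 ≤ s ≤ t ≤ T, ∫₀ᵗ (K(t-u)·1_{u≤t} - K(s-u)·1_{u≤s})² du ≤ C·|t-s|^{2H}. -/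
open MeasureTheory Set

/- On `u ≤ s` the increment is `K (t - u) - K (s - u)`, controlled by Hölder continuity. On
`s < u ≤ t` only `K (t - u) = K (t - u) - K 0` survives, and `K 0 = 0` bounds it by
`C (t - u) ^ H ≤ C (t - s) ^ H`. Squaring and integrating over `(0, t] ⊆ (0, T]` gives the
exponent `2 H`. -/

theorem setIntegral_Ioc_le_mul_of_abs_le {f : ℝ → ℝ} {a b M : ℝ} (hab : a ≤ b)
    (hf : ∀ u ∈ Ioc a b, |f u| ≤ M) : ∫ u in Ioc a b, f u ≤ M * (b - a) := by
  have hvol : volume (Ioc a b) < ⊤ := by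
    rw [Real.volume_Ioc]
    exact ENNReal.ofReal_lt_top
  calc ∫ u in Ioc a b, f u ≤ ‖∫ u in Ioc a b, f u‖ := le_abs_self _
    _ ≤ M * volume.real (Ioc a b) := norm_setIntegral_le_of_norm_le_const hvol hf
    _ = M * (b - a) := by rw [Real.volume_real_Ioc_of_le hab]

section HolderKernel

variable {K : ℝ → ℝ} {T C H : ℝ}

theorem abs_truncated_kernel_increment_le (hC : 0 ≤ C) (hH : 0 ≤ H) (hK0 : K 0 = 0)
    (hK : ∀ s ∈ Icc (0:ℝ) T, ∀ t ∈ Icc (0:ℝ) T, |K t - K s| ≤ C * |t - s| ^ H)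
    {s t u : ℝ} (hs : 0 ≤ s) (hst : s ≤ t) (htT : t ≤ T) (hu : 0 ≤ u) (hut : u ≤ t) :
    |K (t - u) - (if u ≤ s then K (s - u) else 0)| ≤ C * (t - s) ^ H := by
  have htu : t - u ∈ Icc (0:ℝ) T := ⟨by linarith, by linarith⟩
  split_ifs with hus
  · have hsu : s - u ∈ Icc (0:ℝ) T := ⟨by linarith, by linarith⟩
    simpa [abs_of_nonneg (sub_nonneg.mpr hst)] using hK _ hsu _ htu
  · have hzero : (0:ℝ) ∈ Icc (0:ℝ) T := ⟨le_rfl, hs.trans (hst.trans htT)⟩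
    calc |K (t - u) - 0| = |K (t - u) - K 0| := by rw [hK0]
      _ ≤ C * |t - u - 0| ^ H := hK _ hzero _ htu
      _ ≤ C * (t - s) ^ H := by
        rw [sub_zero, abs_of_nonneg htu.1]
        gcongr
        linarith

theorem sq_truncated_kernel_increment_le (hC : 0 ≤ C) (hH : 0 ≤ H) (hK0 : K 0 = 0)
    (hK : ∀ s ∈ Icc (0:ℝ) T, ∀ t ∈ Icc (0:ℝ) T, |K t - K s| ≤ C * |t - s| ^ H)
    {s t u : ℝ} (hs : 0 ≤ s) (hst : s ≤ t) (htT : t ≤ T) (hu : 0 ≤ u) (hut : u ≤ t) :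
    ((if u ≤ t then K (t - u) else 0) - (if u ≤ s then K (s - u) else 0)) ^ 2
      ≤ C ^ 2 * (t - s) ^ (2 * H) := by
  have hts : 0 ≤ t - s := sub_nonneg.mpr hst
  rw [if_pos hut, mul_comm 2 H, Real.rpow_mul hts, Real.rpow_two, ← mul_pow]
  have h := abs_truncated_kernel_increment_le hC hH hK0 hK hs hst htT hu hut
  exact sq_le_sq' (neg_le_of_abs_le h) (le_of_abs_le h)

end HolderKernel

/-- Hölder continuous difference kernel with `K 0 = 0`: square-increment estimate
with the improved exponent `2 * H`. -/
theorem stmt_1 (T H C : ℝ) (hT : 0 < T) (hH : H ∈ Set.Ioo (0:ℝ) 1) (hC : 0 < C)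
    (K : ℝ → ℝ) (hK0 : K 0 = 0)
    (hK : ∀ s ∈ Set.Icc (0:ℝ) T, ∀ t ∈ Set.Icc (0:ℝ) T, |K t - K s| ≤ C * |t - s| ^ H) :
    ∃ C' > (0:ℝ), ∀ s t : ℝ, 0 ≤ s → s ≤ t → t ≤ T →
      (∫ u in Set.Ioc (0:ℝ) t,
        ((if u ≤ t then K (t - u) else 0) - (if u ≤ s then K (s - u) else 0)) ^ 2)
        ≤ C' * |t - s| ^ (2 * H) := by
  refine ⟨C ^ 2 * T, by positivity, fun s t hs hst htT => ?_⟩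
  have hpointwise : ∀ u ∈ Ioc (0:ℝ) t,
      |((if u ≤ t then K (t - u) else 0) - (if u ≤ s then K (s - u) else 0)) ^ 2|
        ≤ C ^ 2 * (t - s) ^ (2 * H) := fun u hu => by
    rw [abs_of_nonneg (sq_nonneg _)]
    exact sq_truncated_kernel_increment_le hC.le hH.1.le hK0 hK hs hst htT hu.1.le hu.2
  calc _ ≤ C ^ 2 * (t - s) ^ (2 * H) * (t - 0) :=
        setIntegral_Ioc_le_mul_of_abs_le (hs.trans hst) hpointwise
    _ ≤ C ^ 2 * (t - s) ^ (2 * H) * T := by gcongr; linarith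
    _ = C ^ 2 * T * |t - s| ^ (2 * H) := by rw [abs_of_nonneg (sub_nonneg.mpr hst)]; ring
end

section
/- Let H ∈ (0,1) and K(t,s) = (t-s)^{H-1/2}/Γ(H+1/2) for 0 ≤ s < t ≤ T. Then there exists a constant C > 0 such that for all 0 ≤ s ≤ t ≤ T, ∫₀ˢ ((t-u)^{H-1/2} - (s-u)^{H-1/2})² du + ∫ₛᵗ (t-u)^{2H-1} du ≤ C·|t-s|^{2H}. -/
/-!
Put `δ = t - s`, `α = H - 1/2 ∈ (-1/2, 1/2)` and substitute `v = s - u`: the first integral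
becomes `∫₀ˢ ((v + δ)^α - v^α)² dv` and the second one is `δ^{2H} / (2H)`.
For `α ≤ 0` the bound `(a - b)² ≤ a² - b²` (valid for `0 ≤ b ≤ a`) turns the integrand
into the telescoping difference `v^{2α} - (v + δ)^{2α}`, whose integral is at most
`δ^{2α+1} / (2α+1)`. For `α > 0` the integral over all of `(0, ∞)` is already
`O(δ^{2α+1})`: subadditivity of `x ↦ x^α` bounds the integrand by `δ^{2α}` on `(0, δ]`,
and Bernoulli's inequality bounds it on `(δ, ∞)` by `α²δ²v^{2α-2}`, which is integrable at
infinity because `α < 1/2`.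
-/

open MeasureTheory Set intervalIntegral

lemma integral_Ioc_sub_rpow {r : ℝ} (hr : -1 < r) {a b : ℝ} (hab : a ≤ b) :
    ∫ u in Ioc a b, (b - u) ^ r = (b - a) ^ (r + 1) / (r + 1) := by
  rw [← integral_of_le hab, integral_comp_sub_left (fun x => x ^ r), integral_rpow (Or.inl hr)]
  simp [Real.zero_rpow (by linarith : r + 1 ≠ 0)]

lemma setIntegral_Ioc_zero_comp_sub_left (f : ℝ → ℝ) {s : ℝ} (hs : 0 ≤ s) :
    ∫ u in Ioc 0 s, f (s - u) = ∫ v in Ioc 0 s, f v := by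
  rw [← integral_of_le hs, ← integral_of_le hs, integral_comp_sub_left]
  simp

lemma rpow_two_mul {x : ℝ} (hx : 0 ≤ x) (a : ℝ) : x ^ (2 * a) = (x ^ a) ^ 2 := by
  rw [mul_comm]
  exact_mod_cast Real.rpow_mul_natCast hx a 2

section Increment

variable {α δ v : ℝ}

lemma sq_rpow_add_sub_rpow_le_of_nonpos (hα : α ≤ 0) (hδ : 0 ≤ δ) (hv : 0 < v) :
    ((v + δ) ^ α - v ^ α) ^ 2 ≤ v ^ (2 * α) - (v + δ) ^ (2 * α) := by
  have hle : (v + δ) ^ α ≤ v ^ α := Real.rpow_le_rpow_of_nonpos hv (by linarith) hα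
  have hnonneg : 0 ≤ (v + δ) ^ α := by positivity
  rw [rpow_two_mul hv.le, rpow_two_mul (by linarith)]
  nlinarith

lemma setIntegral_sq_rpow_add_sub_rpow_le_of_nonpos (hα0 : -1 / 2 < α) (hα : α ≤ 0)
    (hδ : 0 ≤ δ) {s : ℝ} (hs : 0 ≤ s) :
    ∫ v in Ioc 0 s, ((v + δ) ^ α - v ^ α) ^ 2 ≤ δ ^ (2 * α + 1) / (2 * α + 1) := by
  have hr : -1 < 2 * α := by linarith
  have hp : 0 < 2 * α + 1 := by linarith
  have hint₁ : IntegrableOn (fun v => v ^ (2 * α)) (Ioc 0 s) :=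
    (intervalIntegrable_iff_integrableOn_Ioc_of_le hs).1 (intervalIntegrable_rpow' hr)
  have hint₂ : IntegrableOn (fun v => (v + δ) ^ (2 * α)) (Ioc 0 s) :=
    (intervalIntegrable_iff_integrableOn_Ioc_of_le hs).1 <| by
      simpa using (intervalIntegrable_rpow' (a := δ) (b := s + δ) hr).comp_add_right δ
  have hbound : ∀ v ∈ Ioc 0 s,
      ((v + δ) ^ α - v ^ α) ^ 2 ≤ v ^ (2 * α) - (v + δ) ^ (2 * α) :=
    fun v hv => sq_rpow_add_sub_rpow_le_of_nonpos hα hδ hv.1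
  have hint : IntegrableOn (fun v => ((v + δ) ^ α - v ^ α) ^ 2) (Ioc 0 s) := by
    refine (hint₁.sub hint₂).mono' (by fun_prop) ?_
    filter_upwards [ae_restrict_mem measurableSet_Ioc] with v hv
    rw [Real.norm_of_nonneg (sq_nonneg _)]
    exact hbound v hv
  have heval : ∫ v in Ioc 0 s, (v ^ (2 * α) - (v + δ) ^ (2 * α))
      = (s ^ (2 * α + 1) - ((s + δ) ^ (2 * α + 1) - δ ^ (2 * α + 1))) / (2 * α + 1) := by
    rw [integral_sub hint₁ hint₂, ← integral_of_le hs, ← integral_of_le hs,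
      integral_comp_add_right (fun v => v ^ (2 * α)), integral_rpow (Or.inl hr),
      integral_rpow (Or.inl hr), Real.zero_rpow hp.ne', zero_add, sub_zero]
    ring
  have hmono : s ^ (2 * α + 1) ≤ (s + δ) ^ (2 * α + 1) :=
    Real.rpow_le_rpow hs (by linarith) hp.le
  calc ∫ v in Ioc 0 s, ((v + δ) ^ α - v ^ α) ^ 2
      ≤ ∫ v in Ioc 0 s, (v ^ (2 * α) - (v + δ) ^ (2 * α)) :=
        setIntegral_mono_on hint (hint₁.sub hint₂) measurableSet_Ioc hbound
    _ ≤ δ ^ (2 * α + 1) / (2 * α + 1) := by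
        rw [heval]
        gcongr
        linarith

lemma rpow_add_sub_rpow_le_mul_rpow_sub_one (hα0 : 0 ≤ α) (hα1 : α ≤ 1) (hδ : 0 ≤ δ)
    (hv : 0 < v) : (v + δ) ^ α - v ^ α ≤ α * δ * v ^ (α - 1) := by
  have hbernoulli : (1 + δ / v) ^ α ≤ 1 + α * (δ / v) :=
    rpow_one_add_le_one_add_mul_self (by have := div_nonneg hδ hv.le; linarith) hα0 hα1
  calc (v + δ) ^ α - v ^ α = v ^ α * (1 + δ / v) ^ α - v ^ α := by
        rw [← Real.mul_rpow hv.le (by positivity), mul_add, mul_div_cancel₀ _ hv.ne',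
          mul_one]
    _ ≤ v ^ α * (1 + α * (δ / v)) - v ^ α := by gcongr
    _ = α * δ * v ^ (α - 1) := by
        rw [Real.rpow_sub_one hv.ne']
        field_simp
        ring

lemma sq_rpow_add_sub_rpow_le_rpow (hα0 : 0 ≤ α) (hα1 : α ≤ 1) (hδ : 0 ≤ δ)
    (hv : 0 ≤ v) : ((v + δ) ^ α - v ^ α) ^ 2 ≤ δ ^ (2 * α) := by
  have hmono : v ^ α ≤ (v + δ) ^ α := Real.rpow_le_rpow hv (by linarith) hα0
  rw [rpow_two_mul hδ]
  gcongr
  linarith [Real.rpow_add_le_add_rpow hv hδ hα0 hα1]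

lemma sq_rpow_add_sub_rpow_le_mul_rpow (hα0 : 0 ≤ α) (hα1 : α ≤ 1) (hδ : 0 ≤ δ)
    (hv : 0 < v) : ((v + δ) ^ α - v ^ α) ^ 2 ≤ α ^ 2 * δ ^ 2 * v ^ (2 * α - 2) := by
  have hmono : v ^ α ≤ (v + δ) ^ α := Real.rpow_le_rpow hv.le (by linarith) hα0
  calc ((v + δ) ^ α - v ^ α) ^ 2 ≤ (α * δ * v ^ (α - 1)) ^ 2 := by
        gcongr
        exact rpow_add_sub_rpow_le_mul_rpow_sub_one hα0 hα1 hδ hv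
    _ = α ^ 2 * δ ^ 2 * v ^ (2 * α - 2) := by
        rw [show 2 * α - 2 = 2 * (α - 1) by ring, rpow_two_mul hv.le]
        ring

lemma integrableOn_Ioi_sq_rpow_add_sub_rpow (hα0 : 0 ≤ α) (hα : α < 1 / 2) (hδ : 0 < δ) :
    IntegrableOn (fun v => ((v + δ) ^ α - v ^ α) ^ 2) (Ioi 0) := by
  have hnear : IntegrableOn (fun v => ((v + δ) ^ α - v ^ α) ^ 2) (Ioc 0 δ) := by
    refine (integrableOn_const (C := δ ^ (2 * α)) measure_Ioc_lt_top.ne).mono'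
      (by fun_prop) ?_
    filter_upwards [ae_restrict_mem measurableSet_Ioc] with v hv
    rw [Real.norm_of_nonneg (sq_nonneg _)]
    exact sq_rpow_add_sub_rpow_le_rpow hα0 (by linarith) hδ.le hv.1.le
  have hfar : IntegrableOn (fun v => ((v + δ) ^ α - v ^ α) ^ 2) (Ioi δ) := by
    refine ((integrableOn_Ioi_rpow_of_lt (by linarith : 2 * α - 2 < -1) hδ).const_mul
      (α ^ 2 * δ ^ 2)).mono' (by fun_prop) ?_
    filter_upwards [ae_restrict_mem measurableSet_Ioi] with v hv
    rw [Real.norm_of_nonneg (sq_nonneg _)]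
    exact sq_rpow_add_sub_rpow_le_mul_rpow hα0 (by linarith) hδ.le (hδ.trans hv)
  simpa [Ioc_union_Ioi_eq_Ioi hδ.le] using hnear.union hfar

lemma setIntegral_Ioi_sq_rpow_add_sub_rpow_le (hα0 : 0 ≤ α) (hα : α < 1 / 2) (hδ : 0 < δ) :
    ∫ v in Ioi 0, ((v + δ) ^ α - v ^ α) ^ 2
      ≤ (1 + α ^ 2 / (1 - 2 * α)) * δ ^ (2 * α + 1) := by
  have hint := integrableOn_Ioi_sq_rpow_add_sub_rpow hα0 hα hδ
  have hnear : ∫ v in Ioc 0 δ, ((v + δ) ^ α - v ^ α) ^ 2 ≤ δ * δ ^ (2 * α) := by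
    calc ∫ v in Ioc 0 δ, ((v + δ) ^ α - v ^ α) ^ 2 ≤ ∫ _ in Ioc 0 δ, δ ^ (2 * α) :=
          setIntegral_mono_on (hint.mono_set Ioc_subset_Ioi_self)
            (integrableOn_const measure_Ioc_lt_top.ne)
            measurableSet_Ioc fun v hv =>
              sq_rpow_add_sub_rpow_le_rpow hα0 (by linarith) hδ.le hv.1.le
      _ = δ * δ ^ (2 * α) := by
          rw [setIntegral_const, Real.volume_real_Ioc_of_le hδ.le, sub_zero, smul_eq_mul]
  have hfar : ∫ v in Ioi δ, ((v + δ) ^ α - v ^ α) ^ 2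
      ≤ α ^ 2 * δ ^ 2 * (-δ ^ (2 * α - 1) / (2 * α - 1)) := by
    have hr : 2 * α - 2 < -1 := by linarith
    calc ∫ v in Ioi δ, ((v + δ) ^ α - v ^ α) ^ 2
        ≤ ∫ v in Ioi δ, α ^ 2 * δ ^ 2 * v ^ (2 * α - 2) :=
          setIntegral_mono_on (hint.mono_set (Ioi_subset_Ioi hδ.le))
            ((integrableOn_Ioi_rpow_of_lt hr hδ).const_mul _) measurableSet_Ioi fun v hv =>
              sq_rpow_add_sub_rpow_le_mul_rpow hα0 (by linarith) hδ.le (hδ.trans hv)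
      _ = α ^ 2 * δ ^ 2 * (-δ ^ (2 * α - 1) / (2 * α - 1)) := by
          rw [MeasureTheory.integral_const_mul, integral_Ioi_rpow_of_lt hr hδ]
          ring_nf
  have hsplit : ∫ v in Ioi 0, ((v + δ) ^ α - v ^ α) ^ 2
      = (∫ v in Ioc 0 δ, ((v + δ) ^ α - v ^ α) ^ 2)
        + ∫ v in Ioi δ, ((v + δ) ^ α - v ^ α) ^ 2 := by
    rw [← Ioc_union_Ioi_eq_Ioi hδ.le] at hint ⊢
    exact setIntegral_union Ioc_disjoint_Ioi_same measurableSet_Ioi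
      (hint.mono_set subset_union_left) (hint.mono_set subset_union_right)
  have hpow : δ ^ (2 * α + 1) = δ * δ ^ (2 * α) := by
    rw [Real.rpow_add_one hδ.ne', mul_comm]
  have hpow' : δ ^ (2 * α - 1) = δ ^ (2 * α) / δ := Real.rpow_sub_one hδ.ne' _
  have h12 : 1 - 2 * α ≠ 0 := by linarith
  have h21 : 2 * α - 1 ≠ 0 := by linarith
  rw [hsplit]
  refine (add_le_add hnear hfar).trans_eq ?_
  rw [hpow, hpow']
  field_simp
  ring

lemma setIntegral_sq_rpow_add_sub_rpow_le (hα0 : -1 / 2 < α) (hα1 : α < 1 / 2) (hδ : 0 ≤ δ)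
    {s : ℝ} (hs : 0 ≤ s) :
    ∫ v in Ioc 0 s, ((v + δ) ^ α - v ^ α) ^ 2
      ≤ (1 / (2 * α + 1) + 1 + 1 / (1 - 2 * α)) * δ ^ (2 * α + 1) := by
  have hp : 0 < 2 * α + 1 := by linarith
  have hq : 0 < 1 - 2 * α := by linarith
  have hpow : 0 ≤ δ ^ (2 * α + 1) := by positivity
  rcases le_or_gt α 0 with hα | hα
  · calc ∫ v in Ioc 0 s, ((v + δ) ^ α - v ^ α) ^ 2 ≤ δ ^ (2 * α + 1) / (2 * α + 1) :=
          setIntegral_sq_rpow_add_sub_rpow_le_of_nonpos hα0 hα hδ hs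
      _ ≤ (1 / (2 * α + 1) + 1 + 1 / (1 - 2 * α)) * δ ^ (2 * α + 1) := by
          rw [div_eq_mul_one_div, mul_comm]
          gcongr
          linarith [one_div_pos.2 hq]
  rcases hδ.eq_or_lt with rfl | hδ
  · simp [Real.zero_rpow hp.ne']
  have hint := integrableOn_Ioi_sq_rpow_add_sub_rpow hα.le hα1 hδ
  calc ∫ v in Ioc 0 s, ((v + δ) ^ α - v ^ α) ^ 2
      ≤ ∫ v in Ioi 0, ((v + δ) ^ α - v ^ α) ^ 2 :=
        setIntegral_mono_set hint (ae_of_all _ fun _ => sq_nonneg _)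
          Ioc_subset_Ioi_self.eventuallyLE
    _ ≤ (1 + α ^ 2 / (1 - 2 * α)) * δ ^ (2 * α + 1) :=
        setIntegral_Ioi_sq_rpow_add_sub_rpow_le hα.le hα1 hδ
    _ ≤ (1 / (2 * α + 1) + 1 + 1 / (1 - 2 * α)) * δ ^ (2 * α + 1) := by
        have : α ^ 2 / (1 - 2 * α) ≤ 1 / (1 - 2 * α) := by gcongr; nlinarith
        gcongr
        linarith [one_div_pos.2 hp]

end Increment

theorem stmt_2_general (T H : ℝ) (hH : H ∈ Set.Ioo (0:ℝ) 1) :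
    ∃ C > (0:ℝ), ∀ s t : ℝ, 0 ≤ s → s ≤ t → t ≤ T →
      (∫ u in Set.Ioc (0:ℝ) s, ((t - u) ^ (H - 1/2) - (s - u) ^ (H - 1/2)) ^ 2)
        + (∫ u in Set.Ioc s t, (t - u) ^ (2 * H - 1))
        ≤ C * |t - s| ^ (2 * H) := by
  obtain ⟨hH0, hH1⟩ := hH
  have h2H : 0 < 2 - 2 * H := by linarith
  refine ⟨1 / H + 1 + 1 / (2 - 2 * H), by positivity, fun s t hs hst _ => ?_⟩
  have hδ : 0 ≤ t - s := sub_nonneg.2 hst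
  have hfirst := setIntegral_sq_rpow_add_sub_rpow_le (α := H - 1 / 2)
    (by linarith) (by linarith) hδ hs
  rw [← setIntegral_Ioc_zero_comp_sub_left _ hs, show 2 * (H - 1 / 2) + 1 = 2 * H by ring,
    show 1 - 2 * (H - 1 / 2) = 2 - 2 * H by ring] at hfirst
  simp only [sub_add_sub_cancel'] at hfirst
  rw [integral_Ioc_sub_rpow (by linarith) hst, show 2 * H - 1 + 1 = 2 * H by ring,
    abs_of_nonneg hδ]
  calc _ ≤ (1 / (2 * H) + 1 + 1 / (2 - 2 * H)) * (t - s) ^ (2 * H)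
        + (t - s) ^ (2 * H) / (2 * H) :=
        add_le_add_left hfirst _
    _ = (1 / H + 1 + 1 / (2 - 2 * H)) * (t - s) ^ (2 * H) := by
        field_simp
        ring

/-- Square-increment estimate for the Riemann–Liouville fractional kernel
`K(t,s) = (t-s)^{H-1/2} / Γ(H+1/2)`. -/
theorem stmt_2 (T H : ℝ) (hT : 0 < T) (hH : H ∈ Set.Ioo (0:ℝ) 1) :
    ∃ C > (0:ℝ), ∀ s t : ℝ, 0 ≤ s → s ≤ t → t ≤ T →
      (∫ u in Set.Ioc (0:ℝ) s, ((t - u) ^ (H - 1/2) - (s - u) ^ (H - 1/2)) ^ 2)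
        + (∫ u in Set.Ioc s t, (t - u) ^ (2 * H - 1))
        ≤ C * |t - s| ^ (2 * H) :=
  stmt_2_general T H hH
end

section
/- Let Y : [0,T] → ℝ be a continuous function satisfying φ(t) + δ ≤ Y(t) ≤ ψ(t) - δ for all t and some δ > 0, where φ < ψ are continuous. Suppose b : D → ℝ satisfies the local Lipschitz condition |b(t₁,y₁) - b(t₂,y₂)| ≤ (c₁/δ^p)(|y₁-y₂| + |t₁-t₂|^H) on the region D_{δ,δ} = {(t,y) : φ(t)+δ < y < ψ(t)-δ}, and Y(t) = Y(0) + ∫₀ᵗ b(s,Y(s))ds + Z(t) where |Z(t)-Z(s)| ≤ Λ|t-s|^λ for all s,t with 0 < λ ≤ min(H,1). Then there is a constant C (depending on T, c₁, δ, p, λ, sup ψ, Y(0), |b(0,Y(0))|) such that |Y(t) - Y(s)| ≤ (C(1+Λ))·|t-s|^λ for all s,t ∈ [0,T]. -/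
open MeasureTheory Set

/-! The drift term `s ↦ b(s, Y s)` inherits continuity from `Y` through the local Lipschitz
bound on `b`, so it is bounded by some `M` on `[0,T]`. The increment `Y t - Y s` is then the
integral of the drift over `[s,t]`, of size at most `M |t - s| ≤ M T^(1-λ) |t - s|^λ`, plus
the increment of `Z`, of size at most `Λ |t - s|^λ`. -/

theorem continuousOn_of_dist_le_mul_dist_add_rpow {α β γ : Type*} [PseudoMetricSpace α]
    [PseudoMetricSpace β] [PseudoMetricSpace γ] {s : Set α} {f : α → γ} {Y : α → β} {L H : ℝ}
    (hH : 0 < H) (hY : ContinuousOn Y s)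
    (hf : ∀ t ∈ s, ∀ x ∈ s, dist (f t) (f x) ≤ L * (dist (Y t) (Y x) + dist t x ^ H)) :
    ContinuousOn f s := by
  intro x hx
  rw [ContinuousWithinAt, tendsto_iff_dist_tendsto_zero]
  have hbound : ContinuousWithinAt (fun t => L * (dist (Y t) (Y x) + dist t x ^ H)) s x :=
    (((hY x hx).dist continuousWithinAt_const).add
      ((continuousWithinAt_id.dist continuousWithinAt_const).rpow_const
        (Or.inr hH.le))).const_mul L
  have hlim := hbound.tendsto
  simp only [dist_self, Real.zero_rpow hH.ne', add_zero, mul_zero] at hlim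
  refine squeeze_zero' (Filter.Eventually.of_forall fun _ => dist_nonneg) ?_ hlim
  filter_upwards [self_mem_nhdsWithin] with t ht
  exact hf t ht x hx

theorem Real.le_rpow_one_sub_mul_rpow {r T lam : ℝ} (hr : 0 ≤ r) (hrT : r ≤ T) (hlam : lam ≤ 1) :
    r ≤ T ^ (1 - lam) * r ^ lam := by
  calc r = r ^ (1 - lam) * r ^ lam := by
        rw [← Real.rpow_add' hr (by simp), sub_add_cancel, Real.rpow_one]
    _ ≤ T ^ (1 - lam) * r ^ lam := by
        gcongr

theorem abs_sub_le_of_eq_add_integral {a b M lam Λ : ℝ} {Y Z g : ℝ → ℝ} (hlam : lam ≤ 1)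
    (hg : ContinuousOn g (Icc a b)) (hM : ∀ t ∈ Icc a b, |g t| ≤ M)
    (hZ : ∀ s ∈ Icc a b, ∀ t ∈ Icc a b, |Z t - Z s| ≤ Λ * |t - s| ^ lam)
    (hY : ∀ t ∈ Icc a b, Y t = Y a + (∫ u in a..t, g u) + Z t) :
    ∀ s ∈ Icc a b, ∀ t ∈ Icc a b,
      |Y t - Y s| ≤ (M * (b - a) ^ (1 - lam) + Λ) * |t - s| ^ lam := by
  intro s hs t ht
  have hint : ∀ x ∈ Icc a b, IntervalIntegrable g volume a x := fun x hx =>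
    (hg.mono (Icc_subset_Icc_right hx.2)).intervalIntegrable_of_Icc hx.1
  have hincr : Y t - Y s = (∫ u in s..t, g u) + (Z t - Z s) := by
    rw [hY t ht, hY s hs, ← intervalIntegral.integral_interval_sub_left (hint t ht) (hint s hs)]
    ring
  have hdrift : |∫ u in s..t, g u| ≤ M * |t - s| := by
    simpa only [Real.norm_eq_abs] using intervalIntegral.norm_integral_le_of_norm_le_const (f := g)
      fun u hu => hM u (uIoc_subset_uIcc.trans (uIcc_subset_Icc hs ht) hu)
  have hM0 : 0 ≤ M := (abs_nonneg _).trans (hM s hs)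
  have hlen : |t - s| ≤ (b - a) ^ (1 - lam) * |t - s| ^ lam :=
    Real.le_rpow_one_sub_mul_rpow (abs_nonneg _) (Real.dist_le_of_mem_Icc ht hs) hlam
  calc |Y t - Y s| ≤ |∫ u in s..t, g u| + |Z t - Z s| := hincr ▸ abs_add_le _ _
    _ ≤ M * ((b - a) ^ (1 - lam) * |t - s| ^ lam) + Λ * |t - s| ^ lam := by
        gcongr
        exacts [hdrift.trans (by gcongr), hZ s hs t ht]
    _ = (M * (b - a) ^ (1 - lam) + Λ) * |t - s| ^ lam := by ring

theorem stmt_5_general (T H δ c₁ p lam Λ : ℝ)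
    (hT : 0 < T) (hH : 0 < H)
    (hlam' : lam ≤ min H 1) (hΛ : 0 ≤ Λ)
    (φ ψ Y Z : ℝ → ℝ) (b : ℝ → ℝ → ℝ)
    (hYc : ContinuousOn Y (Set.Icc 0 T))
    (hsand : ∀ t ∈ Set.Icc (0:ℝ) T, φ t + δ ≤ Y t ∧ Y t ≤ ψ t - δ)
    (hb : ∀ t₁ ∈ Set.Icc (0:ℝ) T, ∀ t₂ ∈ Set.Icc (0:ℝ) T, ∀ y₁ y₂ : ℝ,
      φ t₁ + δ ≤ y₁ → y₁ ≤ ψ t₁ - δ → φ t₂ + δ ≤ y₂ → y₂ ≤ ψ t₂ - δ →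
      |b t₁ y₁ - b t₂ y₂| ≤ (c₁ / δ ^ p) * (|y₁ - y₂| + |t₁ - t₂| ^ H))
    (heq : ∀ t ∈ Set.Icc (0:ℝ) T,
      Y t = Y 0 + (∫ s in Set.Ioc (0:ℝ) t, b s (Y s)) + Z t)
    (hZ : ∀ s ∈ Set.Icc (0:ℝ) T, ∀ t ∈ Set.Icc (0:ℝ) T, |Z t - Z s| ≤ Λ * |t - s| ^ lam) :
    ∃ C > (0:ℝ), ∀ s ∈ Set.Icc (0:ℝ) T, ∀ t ∈ Set.Icc (0:ℝ) T,
      |Y t - Y s| ≤ (C * (1 + Λ)) * |t - s| ^ lam := by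
  have hdrift : ContinuousOn (fun s => b s (Y s)) (Icc 0 T) :=
    continuousOn_of_dist_le_mul_dist_add_rpow hH hYc fun t ht x hx => by
      simpa only [Real.dist_eq] using
        hb t ht x hx _ _ (hsand t ht).1 (hsand t ht).2 (hsand x hx).1 (hsand x hx).2
  obtain ⟨M, hM⟩ := isCompact_Icc.exists_bound_of_continuousOn hdrift
  have hM0 : 0 ≤ M := (norm_nonneg _).trans (hM 0 ⟨le_rfl, hT.le⟩)
  have hlen : 0 ≤ T ^ (1 - lam) := Real.rpow_nonneg hT.le _
  have hincr := abs_sub_le_of_eq_add_integral (hlam'.trans (min_le_right _ _)) hdrift hM hZ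
    fun t ht => by rw [intervalIntegral.integral_of_le ht.1]; exact heq t ht
  refine ⟨M * T ^ (1 - lam) + 1, by positivity, fun s hs t ht => (hincr s hs t ht).trans ?_⟩
  rw [sub_zero]
  gcongr
  nlinarith [mul_nonneg (mul_nonneg hM0 hlen) hΛ]

/-- Pathwise Hölder-continuity transfer for a sandwiched solution: a solution `Y` of
`Y(t) = Y(0) + ∫₀ᵗ b(s,Y(s)) ds + Z(t)` that stays in `[φ+δ, ψ-δ]`, with `b` locally
Lipschitz on that region and `Z` being `λ`-Hölder with seminorm `Λ`, is `λ`-Hölder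
with seminorm at most `C (1 + Λ)`. -/
theorem stmt_5 (T H δ c₁ p lam Λ : ℝ)
    (hT : 0 < T) (hH : 0 < H) (hδ : 0 < δ) (hc₁ : 0 < c₁) (hp : 1 < p)
    (hlam : 0 < lam) (hlam' : lam ≤ min H 1) (hΛ : 0 ≤ Λ)
    (φ ψ Y Z : ℝ → ℝ) (b : ℝ → ℝ → ℝ)
    (hφ : ContinuousOn φ (Set.Icc 0 T)) (hψ : ContinuousOn ψ (Set.Icc 0 T))
    (hφψ : ∀ t ∈ Set.Icc (0:ℝ) T, φ t < ψ t)
    (hYc : ContinuousOn Y (Set.Icc 0 T))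
    (hsand : ∀ t ∈ Set.Icc (0:ℝ) T, φ t + δ ≤ Y t ∧ Y t ≤ ψ t - δ)
    (hb : ∀ t₁ ∈ Set.Icc (0:ℝ) T, ∀ t₂ ∈ Set.Icc (0:ℝ) T, ∀ y₁ y₂ : ℝ,
      φ t₁ + δ ≤ y₁ → y₁ ≤ ψ t₁ - δ → φ t₂ + δ ≤ y₂ → y₂ ≤ ψ t₂ - δ →
      |b t₁ y₁ - b t₂ y₂| ≤ (c₁ / δ ^ p) * (|y₁ - y₂| + |t₁ - t₂| ^ H))
    (heq : ∀ t ∈ Set.Icc (0:ℝ) T,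
      Y t = Y 0 + (∫ s in Set.Ioc (0:ℝ) t, b s (Y s)) + Z t)
    (hZ : ∀ s ∈ Set.Icc (0:ℝ) T, ∀ t ∈ Set.Icc (0:ℝ) T, |Z t - Z s| ≤ Λ * |t - s| ^ lam) :
    ∃ C > (0:ℝ), ∀ s ∈ Set.Icc (0:ℝ) T, ∀ t ∈ Set.Icc (0:ℝ) T,
      |Y t - Y s| ≤ (C * (1 + Λ)) * |t - s| ^ lam :=
  stmt_5_general T H δ c₁ p lam Λ hT hH hlam' hΛ φ ψ Y Z b hYc hsand hb heq hZ
end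

section
/- Let f : [0,T] → ℝ be H-Hölder continuous with constant C_H, i.e. |f(t)-f(s)| ≤ C_H|t-s|^H for all s,t ∈ [0,T] and some H ∈ (0,1]. Let B_m f denote the Bernstein polynomial of order m on [0,T]: (B_m f)(t) = ∑_{i=0}^m f(Ti/m)·binom(m,i)·(t/T)^i·(1-t/T)^{m-i}. Then B_m f is also H-Hölder continuous with the same constant C_H: |(B_m f)(t) - (B_m f)(s)| ≤ C_H|t-s|^H for all s,t ∈ [0,T]. -/
/-!
For `0 ≤ u ≤ v ≤ 1`, throw `m` independent uniform points into `[0, 1]` and let `j` and `k` count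
those in `[0, u)` and `[u, v)`; the joint law of `(j, k)` is `trinomialWeight m u (v - u) (1 - v)`.
Then `j + k` and `j` are binomial with parameters `v` and `u`, so the Bernstein sums at `v` and `u`
are the expectations of `g (j + k)` and `g j`. Their difference is thus an average of
`g (j + k) - g j`, which is at most `ω (k / m)` for the concave modulus `ω x = C T^H x^H`, and
since `k / m` has mean `v - u`, Jensen's inequality bounds the average by `ω (v - u)`.
-/

open Finset

theorem Finset.sum_range_eq_sum_range_add {M : Type*} [AddCommMonoid M] {m j : ℕ} {F : ℕ → M}
    (hlt : ∀ i < j, F i = 0) (hgt : ∀ i, m < i → F i = 0) :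
    ∑ i ∈ range (m + 1), F i = ∑ k ∈ range (m + 1), F (j + k) := by
  calc ∑ i ∈ range (m + 1), F i = ∑ i ∈ range (j + (m + 1)), F i :=
        sum_subset (range_subset_range.2 (by omega)) fun i _ hi => hgt i (by simp at hi; omega)
    _ = _ := by rw [sum_range_add, sum_eq_zero fun i hi => hlt i (mem_range.1 hi), zero_add]

lemma add_pow_eq_sum_range {R : Type*} [CommSemiring R] {n m : ℕ} (hnm : n ≤ m) (x y : R) :
    (x + y) ^ n = ∑ k ∈ range (m + 1), x ^ k * y ^ (n - k) * n.choose k := by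
  rw [add_pow]
  refine sum_subset (range_subset_range.2 (by omega)) fun k _ hk => ?_
  rw [Nat.choose_eq_zero_of_lt (by simp at hk; omega), Nat.cast_zero, mul_zero]

def bernsteinSum (m : ℕ) (g : ℕ → ℝ) (x : ℝ) : ℝ :=
  ∑ i ∈ range (m + 1), g i * m.choose i * x ^ i * (1 - x) ^ (m - i)

lemma bernsteinSum_eq_sum_eval (m : ℕ) (g : ℕ → ℝ) (x : ℝ) :
    bernsteinSum m g x = ∑ i ∈ range (m + 1), g i * (bernsteinPolynomial ℝ m i).eval x := by
  simp only [bernsteinSum, bernsteinPolynomial, Polynomial.eval_mul, Polynomial.eval_pow,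
    Polynomial.eval_sub, Polynomial.eval_one, Polynomial.eval_X, Polynomial.eval_natCast, mul_assoc]

lemma bernsteinSum_one (m : ℕ) (x : ℝ) : bernsteinSum m (fun _ => 1) x = 1 := by
  simpa [bernsteinSum_eq_sum_eval, Polynomial.eval_finsetSum] using
    congrArg (Polynomial.eval x) (bernsteinPolynomial.sum ℝ m)

lemma bernsteinSum_natCast (m : ℕ) (x : ℝ) : bernsteinSum m (fun i => i) x = m * x := by
  simpa [bernsteinSum_eq_sum_eval, Polynomial.eval_finsetSum] using
    congrArg (Polynomial.eval x) (bernsteinPolynomial.sum_smul ℝ m)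

def trinomialWeight (m : ℕ) (x y z : ℝ) (j k : ℕ) : ℝ :=
  m.choose (j + k) * (j + k).choose j * x ^ j * y ^ k * z ^ (m - (j + k))

lemma trinomialWeight_nonneg (m : ℕ) {x y z : ℝ} (hx : 0 ≤ x) (hy : 0 ≤ y) (hz : 0 ≤ z)
    (j k : ℕ) : 0 ≤ trinomialWeight m x y z j k := by
  unfold trinomialWeight; positivity

lemma trinomialWeight_comm (m : ℕ) (x y z : ℝ) (j k : ℕ) :
    trinomialWeight m x y z j k = trinomialWeight m y x z k j := by
  simp only [trinomialWeight, add_comm k j, ← Nat.choose_symm_add]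
  ring

lemma bernsteinSum_add_eq_sum_sum (m : ℕ) (g : ℕ → ℝ) (x y : ℝ) :
    bernsteinSum m g (x + y) = ∑ j ∈ range (m + 1), ∑ k ∈ range (m + 1),
      g (j + k) * trinomialWeight m x y (1 - (x + y)) j k := by
  set z := 1 - (x + y)
  calc bernsteinSum m g (x + y)
      = ∑ i ∈ range (m + 1), ∑ j ∈ range (m + 1),
          g i * m.choose i * i.choose j * x ^ j * y ^ (i - j) * z ^ (m - i) := by
        refine sum_congr rfl fun i hi => ?_
        rw [add_pow_eq_sum_range (Nat.lt_succ_iff.1 (mem_range.1 hi)), mul_sum, sum_mul]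
        exact sum_congr rfl fun j _ => by ring
    _ = _ := by
        rw [sum_comm]
        refine sum_congr rfl fun j _ => ?_
        rw [sum_range_eq_sum_range_add (j := j)
          (fun i hi => by simp [Nat.choose_eq_zero_of_lt hi])
          (fun i hi => by simp [Nat.choose_eq_zero_of_lt hi])]
        refine sum_congr rfl fun k _ => ?_
        rw [trinomialWeight, Nat.add_sub_cancel_left]
        ring

lemma bernsteinSum_eq_sum_sum (m : ℕ) (g : ℕ → ℝ) (x y : ℝ) :
    bernsteinSum m g x = ∑ j ∈ range (m + 1), ∑ k ∈ range (m + 1),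
      g j * trinomialWeight m x y (1 - (x + y)) j k := by
  unfold bernsteinSum
  rw [show 1 - x = y + (1 - (x + y)) by ring]
  refine sum_congr rfl fun j _ => ?_
  rw [add_pow_eq_sum_range (Nat.sub_le m j), mul_sum]
  refine sum_congr rfl fun k _ => ?_
  have hchoose : (m.choose (j + k) : ℝ) * (j + k).choose j = m.choose j * (m - j).choose k := by
    rw [← Nat.cast_mul, ← Nat.cast_mul, Nat.choose_mul (Nat.le_add_right j k),
      Nat.add_sub_cancel_left]
  rw [trinomialWeight, Nat.sub_sub]
  linear_combination (-(g j * x ^ j * y ^ k * (1 - (x + y)) ^ (m - (j + k)))) * hchoose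

lemma sum_sum_trinomialWeight (m : ℕ) (x y : ℝ) :
    ∑ j ∈ range (m + 1), ∑ k ∈ range (m + 1), trinomialWeight m x y (1 - (x + y)) j k = 1 := by
  simpa using (bernsteinSum_add_eq_sum_sum m (fun _ => 1) x y).symm.trans (bernsteinSum_one m _)

lemma sum_sum_natCast_mul_trinomialWeight (m : ℕ) (x y : ℝ) :
    ∑ j ∈ range (m + 1), ∑ k ∈ range (m + 1), (k : ℝ) * trinomialWeight m x y (1 - (x + y)) j k
      = m * y := by
  rw [sum_comm, ← bernsteinSum_natCast m y, bernsteinSum_eq_sum_sum m _ y x]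
  simp only [trinomialWeight_comm m x y, add_comm x y]

theorem abs_bernsteinSum_sub_le {m : ℕ} (hm : 0 < m) {g : ℕ → ℝ} {ω : ℝ → ℝ}
    (hω : ConcaveOn ℝ (Set.Ici 0) ω)
    (hg : ∀ j k, j + k ≤ m → |g (j + k) - g j| ≤ ω (k / m))
    {u v : ℝ} (hu : u ∈ Set.Icc (0 : ℝ) 1) (hv : v ∈ Set.Icc (0 : ℝ) 1) :
    |bernsteinSum m g v - bernsteinSum m g u| ≤ ω |v - u| := by
  wlog huv : u ≤ v generalizing u v
  · rw [abs_sub_comm, abs_sub_comm v]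
    exact this hv hu (le_of_not_ge huv)
  obtain ⟨h, hh, rfl⟩ : ∃ h, 0 ≤ h ∧ v = u + h := ⟨v - u, by linarith, by ring⟩
  set W := trinomialWeight m u h (1 - (u + h))
  have hW : ∀ j k, 0 ≤ W j k := trinomialWeight_nonneg m hu.1 hh (by linarith [hv.2])
  have hterm : ∀ j k, |(g (j + k) - g j) * W j k| ≤ W j k * ω (k / m) := by
    intro j k
    rcases le_or_gt (j + k) m with hjk | hjk
    · rw [abs_mul, abs_of_nonneg (hW j k), mul_comm]
      exact mul_le_mul_of_nonneg_left (hg j k hjk) (hW j k)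
    · simp [W, trinomialWeight, Nat.choose_eq_zero_of_lt hjk]
  have hmean : ∑ j ∈ range (m + 1), ∑ k ∈ range (m + 1), W j k * (k / m) = h := by
    simp_rw [mul_div_assoc', ← sum_div, mul_comm (W _ _)]
    rw [sum_sum_natCast_mul_trinomialWeight]
    field_simp
  have hjensen := hω.le_map_sum (t := range (m + 1) ×ˢ range (m + 1))
    (w := fun p => W p.1 p.2) (p := fun p => (p.2 : ℝ) / m) (fun p _ => hW p.1 p.2)
    (by rw [sum_product]; exact sum_sum_trinomialWeight m u h)
    (fun p _ => Set.mem_Ici.2 (by positivity))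
  simp only [sum_product, smul_eq_mul, hmean] at hjensen
  rw [bernsteinSum_add_eq_sum_sum m g u h, bernsteinSum_eq_sum_sum m g u h, add_sub_cancel_left,
    abs_of_nonneg hh, ← sum_sub_distrib]
  simp_rw [← sum_sub_distrib, ← sub_mul]
  calc _ ≤ ∑ j ∈ range (m + 1), ∑ k ∈ range (m + 1), |(g (j + k) - g j) * W j k| :=
        (abs_sum_le_sum_abs _ _).trans (sum_le_sum fun j _ => abs_sum_le_sum_abs _ _)
    _ ≤ _ := (sum_le_sum fun j _ => sum_le_sum fun k _ => hterm j k).trans hjensen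

lemma abs_sub_le_of_holder_nodes {T H C : ℝ} (hT : 0 < T) {f : ℝ → ℝ}
    (hf : ∀ s ∈ Set.Icc (0:ℝ) T, ∀ t ∈ Set.Icc (0:ℝ) T, |f t - f s| ≤ C * |t - s| ^ H)
    {m : ℕ} (hm : 0 < m) {j k : ℕ} (hjk : j + k ≤ m) :
    |f (T * ↑(j + k) / m) - f (T * j / m)| ≤ C * T ^ H * (k / m) ^ H := by
  have hnode : ∀ i ≤ m, T * i / m ∈ Set.Icc 0 T := fun i hi =>
    ⟨by positivity, div_le_of_le_mul₀ (by positivity) hT.le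
      (mul_le_mul_of_nonneg_left (by exact_mod_cast hi) hT.le)⟩
  have hdist : |T * ↑(j + k) / m - T * j / m| = T * (k / m) := by
    rw [abs_of_nonneg (by push_cast; field_simp; nlinarith)]
    push_cast; ring
  calc _ ≤ C * |T * ↑(j + k) / m - T * j / m| ^ H :=
        hf _ (hnode j (by omega)) _ (hnode (j + k) hjk)
    _ = C * T ^ H * (k / m) ^ H := by
        rw [hdist, Real.mul_rpow hT.le (by positivity), mul_assoc]

/-- Bernstein polynomials on `[0,T]` preserve `H`-Hölder continuity with the same
Hölder constant. -/
theorem stmt_13 (T H C : ℝ) (hT : 0 < T) (hH : H ∈ Set.Ioc (0:ℝ) 1) (hC : 0 ≤ C)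
    (f : ℝ → ℝ)
    (hf : ∀ s ∈ Set.Icc (0:ℝ) T, ∀ t ∈ Set.Icc (0:ℝ) T, |f t - f s| ≤ C * |t - s| ^ H)
    (m : ℕ) (hm : 1 ≤ m) :
    ∀ s ∈ Set.Icc (0:ℝ) T, ∀ t ∈ Set.Icc (0:ℝ) T,
      |(∑ i ∈ Finset.range (m + 1),
          f (T * i / m) * (m.choose i : ℝ) * (t / T) ^ i * (1 - t / T) ^ (m - i))
        - (∑ i ∈ Finset.range (m + 1),
          f (T * i / m) * (m.choose i : ℝ) * (s / T) ^ i * (1 - s / T) ^ (m - i))|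
        ≤ C * |t - s| ^ H := by
  intro s hs t ht
  have hconcave : ConcaveOn ℝ (Set.Ici 0) (fun x : ℝ => C * T ^ H * x ^ H) :=
    (Real.concaveOn_rpow hH.1.le hH.2).smul (by positivity)
  have hunit : ∀ x ∈ Set.Icc (0:ℝ) T, x / T ∈ Set.Icc (0:ℝ) 1 := fun x hx =>
    ⟨div_nonneg hx.1 hT.le, div_le_one_of_le₀ hx.2 hT.le⟩
  have key := abs_bernsteinSum_sub_le hm (g := fun i => f (T * i / m)) hconcave
    (fun j k hjk => abs_sub_le_of_holder_nodes hT hf hm hjk) (hunit s hs) (hunit t ht)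
  rwa [← sub_div, abs_div, abs_of_pos hT, Real.div_rpow (abs_nonneg _) hT.le,
    mul_assoc, mul_div_cancel₀ _ (by positivity)] at key
end
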